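/- arXiv:1204.2674 — 3 statements merged into one kernel-verified Lean document; each statement's English description precedes it below -/
import Mathlib

section
/- In the free unital associative ℚ-algebra ℚ⟨X⟩, for all elements a₁,...,a₆, the element [a₁,a₂][a₃,a₄][a₅,a₆] + [a₁,a₃][a₂,a₄][a₅,a₆] lies in the ideal T⁽³,²⁾_ℚ generated by all [b₁,b₂,b₃][b₄,b₅] and [b₁,b₂,b₃,b₄]. -/
/-!
Since `[x,y,z] v = v [x,y,z] + [x,y,z,v]`, every product `[x,y,z] v [e,f]` lies in `T⁽³,²⁾`.
Expanding `[a₁, a₂a₃, a₄]` by the Leibniz rule gives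
`[a₁,a₂][a₃,a₄] + [a₁,a₃][a₂,a₄] = [a₁,a₂a₃,a₄] - [a₁,a₂,a₄] a₃ - a₂ [a₁,a₃,a₄] - [a₂,a₄,[a₁,a₃]]`,
and each term on the right becomes a member of `T⁽³,²⁾` once multiplied by `[a₅,a₆]`.
-/

noncomputable section

/-- `ℚ⟨X⟩`, the free unital associative `ℚ`-algebra on a countable set `X`. -/
abbrev RQ : Type := FreeAlgebra ℚ ℕ

/-- The commutator `[a,b] = ab - ba`. -/
def br (a b : RQ) : RQ := a * b - b * a

/-- `T⁽³,²⁾_ℚ`: the two-sided ideal generated by all `[b₁,b₂,b₃][b₄,b₅]` and `[b₁,b₂,b₃,b₄]`. -/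
def T32Q : TwoSidedIdeal RQ := TwoSidedIdeal.span
  ({y | ∃ a b c d e : RQ, y = br (br a b) c * br d e} ∪
   {y | ∃ a b c d : RQ, y = br (br (br a b) c) d})

lemma br_br_mul_br_mem_T32Q (a b c d e : RQ) : br (br a b) c * br d e ∈ T32Q :=
  TwoSidedIdeal.subset_span (Or.inl ⟨a, b, c, d, e, rfl⟩)

lemma br_br_br_mem_T32Q (a b c d : RQ) : br (br (br a b) c) d ∈ T32Q :=
  TwoSidedIdeal.subset_span (Or.inr ⟨a, b, c, d, rfl⟩)

lemma br_br_mul_mul_br_mem_T32Q (x y z v e f : RQ) : br (br x y) z * v * br e f ∈ T32Q := by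
  have h : br (br x y) z * v * br e f
      = v * (br (br x y) z * br e f) + br (br (br x y) z) v * br e f := by
    simp only [br]; noncomm_ring
  rw [h]
  exact T32Q.add_mem (T32Q.mul_mem_left _ _ (br_br_mul_br_mem_T32Q x y z e f))
    (T32Q.mul_mem_right _ _ (br_br_br_mem_T32Q x y z v))

lemma br_mul_br_add_br_mul_br_eq (a₁ a₂ a₃ a₄ : RQ) :
    br a₁ a₂ * br a₃ a₄ + br a₁ a₃ * br a₂ a₄
      = br (br a₁ (a₂ * a₃)) a₄ - br (br a₁ a₂) a₄ * a₃ - a₂ * br (br a₁ a₃) a₄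
        - br (br a₂ a₄) (br a₁ a₃) := by
  simp only [br]; noncomm_ring

theorem stmt14 (a₁ a₂ a₃ a₄ a₅ a₆ : RQ) :
    br a₁ a₂ * br a₃ a₄ * br a₅ a₆ + br a₁ a₃ * br a₂ a₄ * br a₅ a₆ ∈ T32Q := by
  rw [← add_mul, br_mul_br_add_br_mul_br_eq, sub_mul, sub_mul, sub_mul, mul_assoc a₂]
  refine T32Q.sub_mem (T32Q.sub_mem (T32Q.sub_mem ?_ ?_) ?_) ?_
  · exact br_br_mul_br_mem_T32Q _ _ _ _ _
  · exact br_br_mul_mul_br_mem_T32Q _ _ _ _ _ _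
  · exact T32Q.mul_mem_left _ _ (br_br_mul_br_mem_T32Q _ _ _ _ _)
  · exact br_br_mul_br_mem_T32Q _ _ _ _ _
end
end

section
/- In ℚ⟨X⟩, for all k ≥ 3, all permutations σ ∈ S_{2k} and all elements a₁,...,a_{2k}, one has [a₁,a₂][a₃,a₄]···[a_{2k−1},a_{2k}] ≡ sgn(σ)·[a_{σ(1)},a_{σ(2)}]···[a_{σ(2k−1)},a_{σ(2k)}] modulo T⁽³,²⁾_ℚ. -/
noncomputable section

/-!
Modulo `T⁽³,²⁾` commutators commute with each other, since `[[x,y],[u,v]]` is a difference of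
two commutators of length four. Moreover `[a,b][x,y] + [b,y][a,x]` is a sum of terms
`s [[p,q],r] t`, and such a term is killed by any further commutator factor. So, as soon as a
third factor is present (`k ≥ 3`), exchanging two letters between two commutator factors changes
the sign of the product, as does exchanging the two letters of one factor. Products of
commutators live in a commutative subring, where this makes the product alternating under all
transpositions, hence under all of `S_{2k}`.
-/

open Equiv Equiv.Perm Finset
open scoped IsMulCommutative

attribute [local instance] LieRing.ofAssociativeRing

theorem Finset.prod_eq_neg_prod_of_eqOn_compl {ι R : Type*} [Fintype ι] [DecidableEq ι]
    [CommRing R] {f g : ι → R} (t : Finset ι) (hout : ∀ s ∉ t, g s = f s)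
    (hin : ∏ s ∈ t, g s = -∏ s ∈ t, f s) : ∏ s, g s = -∏ s, f s := by
  rw [← prod_mul_prod_compl t g, ← prod_mul_prod_compl t f, hin, neg_mul,
    prod_congr rfl fun s hs => hout s (mem_compl.mp hs)]

section PairProducts

variable {ι M R : Type*} [Fintype ι] [DecidableEq ι] [CommRing R] {β : M → M → R}

theorem prod_pair_comp_swap (hskew : ∀ x y, β y x = -β x y)
    (hexch : ∀ a b x y u v, β a b * β x y * β u v = -(β a x * β b y * β u v))
    (hcard : 3 ≤ Fintype.card ι) (c : ι × Fin 2 → M) {u v : ι × Fin 2} (huv : u ≠ v) :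
    ∏ s, β (c (swap u v (s, 0))) (c (swap u v (s, 1))) = -∏ s, β (c (s, 0)) (c (s, 1)) := by
  obtain ⟨p, ε⟩ := u
  obtain ⟨q, δ⟩ := v
  by_cases hpq : p = q
  · subst hpq
    have hεδ : ε ≠ δ := fun h => huv (by rw [h])
    refine prod_eq_neg_prod_of_eqOn_compl {p} (fun s hs => ?_) ?_
    · have hs : s ≠ p := by simpa using hs
      simp [swap_apply_def, hs]
    · fin_cases ε <;> fin_cases δ <;> simp only [Fin.zero_eta, Fin.mk_one,
        Fin.isValue, ne_eq, not_true_eq_false, zero_ne_one, one_ne_zero, not_false_eq_true,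
        swap_apply_def, Prod.mk.injEq, and_true, and_false, ↓reduceIte, prod_singleton] at hεδ ⊢
      all_goals exact hskew _ _
  · obtain ⟨r, hrp, hrq⟩ : ∃ r, r ≠ p ∧ r ≠ q := by
      obtain ⟨r, -, hr⟩ := exists_mem_notMem_of_card_lt_card (s := {p, q}) (t := univ)
        ((card_le_two).trans_lt (by rw [card_univ]; omega))
      exact ⟨r, by simpa [not_or] using hr⟩
    refine prod_eq_neg_prod_of_eqOn_compl {p, q, r} (fun s hs => ?_) ?_
    · simp only [mem_insert, mem_singleton, not_or] at hs
      simp [swap_apply_def, hs]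
    · have hp : p ∉ ({q, r} : Finset ι) := by simp [hpq, Ne.symm hrp]
      have hq : q ∉ ({r} : Finset ι) := by simp [Ne.symm hrq]
      rw [prod_insert hp, prod_insert hq, prod_singleton, prod_insert hp, prod_insert hq,
        prod_singleton]
      fin_cases ε <;> fin_cases δ <;> simp only [Fin.zero_eta, Fin.mk_one,
        Fin.isValue, swap_apply_left, swap_apply_right, swap_apply_def, Prod.mk.injEq, zero_ne_one,
        one_ne_zero, and_false, and_true, and_self, ↓reduceIte, hpq, Ne.symm hpq, hrp, hrq] <;>
        generalize c (p, 0) = a, c (p, 1) = b, c (q, 0) = x, c (q, 1) = y, c (r, 0) = e,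
          c (r, 1) = f
      · linear_combination hexch x b a y e f + hexch a b x y e f - β b y * β e f * hskew a x
      · linear_combination hexch y b x a e f - β y x * β e f * hskew a b + β a b * β e f * hskew x y
      · linear_combination hexch a b x y e f
      · linear_combination hexch a y x b e f + hexch a b x y e f - β a x * β e f * hskew b y

theorem prod_pair_comp_perm (hskew : ∀ x y, β y x = -β x y)
    (hexch : ∀ a b x y u v, β a b * β x y * β u v = -(β a x * β b y * β u v))
    (hcard : 3 ≤ Fintype.card ι) (σ : Perm (ι × Fin 2)) (c : ι × Fin 2 → M) :
    ∏ s, β (c (σ (s, 0))) (c (σ (s, 1))) = (sign σ : ℤ) • ∏ s, β (c (s, 0)) (c (s, 1)) := by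
  induction σ using swap_induction_on generalizing c with
  | one => simp
  | swap_mul σ u v huv ih =>
    simp only [Perm.mul_apply]
    rw [ih (fun t => c (swap u v t)), prod_pair_comp_swap hskew hexch hcard c huv,
      Perm.sign_mul, sign_swap huv]
    simp

end PairProducts

def finPairEquiv (k : ℕ) : Fin k × Fin 2 ≃ Fin (2 * k) :=
  finProdFinEquiv.trans (finCongr (Nat.mul_comm k 2))

section LieIdentities

variable {B : Type*} [Ring B]

theorem commute_lie_lie (hnil : ∀ x y z w : B, ⁅⁅⁅x, y⁆, z⁆, w⁆ = 0) (x y u v : B) :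
    Commute ⁅x, y⁆ ⁅u, v⁆ := by
  rw [commute_iff_lie_eq, leibniz_lie, ← lie_skew u, hnil, hnil, neg_zero, add_zero]

theorem lie_lie_mul_mul_lie_eq_zero (hprod : ∀ x y z u v : B, ⁅⁅x, y⁆, z⁆ * ⁅u, v⁆ = 0)
    (x y z w u v : B) : ⁅⁅x, y⁆, z⁆ * w * ⁅u, v⁆ = 0 := by
  have : ⁅⁅x, y⁆, z⁆ * w * ⁅u, v⁆ = ⁅⁅x, y⁆, z⁆ * ⁅u, v⁆ * w + ⁅⁅x, y⁆, z⁆ * ⁅w, ⁅u, v⁆⁆ := by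
    simp only [Ring.lie_def]; noncomm_ring
  rw [this, hprod, hprod, zero_mul, zero_add]

theorem lie_mul_lie_mul_lie_exchange (hprod : ∀ x y z u v : B, ⁅⁅x, y⁆, z⁆ * ⁅u, v⁆ = 0)
    (hnil : ∀ x y z w : B, ⁅⁅⁅x, y⁆, z⁆, w⁆ = 0) (a b x y u v : B) :
    ⁅a, b⁆ * ⁅x, y⁆ * ⁅u, v⁆ = -(⁅a, x⁆ * ⁅b, y⁆ * ⁅u, v⁆) := by
  have h : (⁅a, b⁆ * ⁅x, y⁆ + ⁅b, y⁆ * ⁅a, x⁆) * ⁅u, v⁆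
      = ⁅⁅a, b * x⁆, y⁆ * ⁅u, v⁆ - ⁅⁅a, b⁆, y⁆ * x * ⁅u, v⁆ - b * (⁅⁅a, x⁆, y⁆ * ⁅u, v⁆) := by
    simp only [Ring.lie_def]; noncomm_ring
  rw [hprod, lie_lie_mul_mul_lie_eq_zero hprod, hprod, mul_zero, sub_zero, sub_zero, add_mul,
    (commute_lie_lie hnil b y a x).eq] at h
  exact eq_neg_of_add_eq_zero_left h

theorem list_prod_lie_eq_sign_smul (hprod : ∀ x y z u v : B, ⁅⁅x, y⁆, z⁆ * ⁅u, v⁆ = 0)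
    (hnil : ∀ x y z w : B, ⁅⁅⁅x, y⁆, z⁆, w⁆ = 0) {k : ℕ} (hk : 3 ≤ k)
    (σ : Perm (Fin (2 * k))) (a : Fin (2 * k) → B) :
    (List.ofFn fun i : Fin k => ⁅a (finPairEquiv k (i, 0)), a (finPairEquiv k (i, 1))⁆).prod =
      (sign σ : ℤ) • (List.ofFn fun i : Fin k =>
        ⁅a (σ (finPairEquiv k (i, 0))), a (σ (finPairEquiv k (i, 1)))⁆).prod := by
  let S := Subring.closure {z : B | ∃ x y : B, ⁅x, y⁆ = z}
  have : IsMulCommutative S := Subring.isMulCommutative_closure <| by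
    rintro _ ⟨x, y, rfl⟩ _ ⟨u, v, rfl⟩
    exact (commute_lie_lie hnil x y u v).eq
  let β : B → B → S := fun x y => ⟨⁅x, y⁆, Subring.subset_closure ⟨x, y, rfl⟩⟩
  have hlist : ∀ b : Fin (2 * k) → B,
      (List.ofFn fun i : Fin k => ⁅b (finPairEquiv k (i, 0)), b (finPairEquiv k (i, 1))⁆).prod =
        ((∏ i, β (b (finPairEquiv k (i, 0))) (b (finPairEquiv k (i, 1))) : S) : B) := by
    intro b
    rw [← List.prod_ofFn, SubmonoidClass.coe_list_prod, List.map_ofFn]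
    rfl
  have hskew : ∀ x y, β y x = -β x y := fun x y => Subtype.ext (lie_skew y x).symm
  have hexch : ∀ a b x y u v, β a b * β x y * β u v = -(β a x * β b y * β u v) :=
    fun a b x y u v => Subtype.ext (lie_mul_lie_mul_lie_exchange hprod hnil a b x y u v)
  have key := prod_pair_comp_perm hskew hexch (by simpa using hk)
    ((finPairEquiv k).symm.permCongr σ) (a ∘ finPairEquiv k)
  simp only [sign_permCongr, permCongr_apply, Function.comp_apply, symm_symm,
    apply_symm_apply] at key
  rw [hlist a, hlist (fun t => a (σ t)), key, ← AddSubgroupClass.coe_zsmul, smul_smul,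
    ← Units.val_mul, Int.units_mul_self, Units.val_one, one_smul]

end LieIdentities

theorem mk'_br (x y : RQ) :
    T32Q.ringCon.mk' (br x y) = ⁅T32Q.ringCon.mk' x, T32Q.ringCon.mk' y⁆ := by
  simp only [br, Ring.lie_def, map_sub, map_mul]

theorem lie_lie_mul_lie_quotient_T32Q :
    ∀ x y z u v : T32Q.ringCon.Quotient, ⁅⁅x, y⁆, z⁆ * ⁅u, v⁆ = 0 := by
  simp only [T32Q.ringCon.mk'_surjective.forall, ← mk'_br, ← map_mul, ← TwoSidedIdeal.mem_ker,
    TwoSidedIdeal.ker_ringCon_mk']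
  exact fun x y z u v => TwoSidedIdeal.subset_span (.inl ⟨x, y, z, u, v, rfl⟩)

theorem lie_lie_lie_quotient_T32Q : ∀ x y z w : T32Q.ringCon.Quotient, ⁅⁅⁅x, y⁆, z⁆, w⁆ = 0 := by
  simp only [T32Q.ringCon.mk'_surjective.forall, ← mk'_br, ← TwoSidedIdeal.mem_ker,
    TwoSidedIdeal.ker_ringCon_mk']
  exact fun x y z w => TwoSidedIdeal.subset_span (.inr ⟨x, y, z, w, rfl⟩)

theorem stmt15 (k : ℕ) (hk : 3 ≤ k) (σ : Equiv.Perm (Fin (2 * k))) (a : Fin (2 * k) → RQ) :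
    (List.ofFn fun i : Fin k =>
        br (a ⟨2 * i.1, by omega⟩) (a ⟨2 * i.1 + 1, by omega⟩)).prod
      - (Equiv.Perm.sign σ : ℤ) •
        (List.ofFn fun i : Fin k =>
            br (a (σ ⟨2 * i.1, by omega⟩)) (a (σ ⟨2 * i.1 + 1, by omega⟩))).prod
      ∈ T32Q := by
  rw [← TwoSidedIdeal.ker_ringCon_mk' T32Q, TwoSidedIdeal.mem_ker, map_sub, sub_eq_zero]
  have := list_prod_lie_eq_sign_smul lie_lie_mul_lie_quotient_T32Q lie_lie_lie_quotient_T32Q hk σ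
    (fun t => T32Q.ringCon.mk' (a t))
  have h0 (i : Fin k) : finPairEquiv k (i, 0) = ⟨2 * i.1, by omega⟩ := by
    ext; simp [finPairEquiv]
  have h1 (i : Fin k) : finPairEquiv k (i, 1) = ⟨2 * i.1 + 1, by omega⟩ := by
    ext; simp [finPairEquiv, add_comm]
  simpa only [map_zsmul, map_list_prod, List.map_ofFn, Function.comp_def, mk'_br, h0, h1]
    using this
end
end

section
/- In ℚ⟨X⟩, the element [x₁,x₃][x₂,x₃] does not lie in the ideal T⁽³,²⁾_ℚ, and the element [x₁,x₂]² does not lie in T⁽³,²⁾_ℚ. -/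
noncomputable section

/-- The free generators. -/
def x (i : ℕ) : RQ := FreeAlgebra.ι ℚ i

/-!
Both elements are detected by the linear functional `middleFunctional`, which sends a word
`x_p x_q x_r x_s` to `1` if `q = r` and to `0` otherwise, and kills words of any other length.
It vanishes on `T⁽³,²⁾_ℚ`: by multilinearity it suffices to evaluate it on `u g v` with `g` a
generator of the ideal and all arguments words. Commutators with the empty word vanish, so
`u [b₁,b₂,b₃][b₄,b₅] v` is homogeneous of degree at least `5`, while `u [b₁,b₂,b₃,b₄] v` has
degree `4` only for `u = v = 1` and single letters `bᵢ`, where the eight terms cancel in pairs.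
On the other hand the functional takes the values `-1` on `[x₁,x₃][x₂,x₃]` and `-2` on `[x₁,x₂]²`.
-/

namespace Submodule

variable {R M N P : Type*} [CommSemiring R] [AddCommMonoid M] [AddCommMonoid N]
  [AddCommMonoid P] [Module R M] [Module R N] [Module R P]

theorem apply_mem_span_image2 (f : M →ₗ[R] N →ₗ[R] P) {s : Set M} {t : Set N} {m : M} {n : N}
    (hm : m ∈ span R s) (hn : n ∈ span R t) :
    f m n ∈ span R (Set.image2 (fun a b ↦ f a b) s t) :=
  map₂_span_span (R := R) f s t ▸ apply_mem_map₂ f hm hn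

end Submodule

namespace FreeAlgebra

variable (R : Type*) {X : Type*} [CommSemiring R]

theorem basisFreeMonoid_apply (w : FreeMonoid X) :
    basisFreeMonoid R X w = FreeMonoid.lift (ι R) w := by
  simp [basisFreeMonoid, equivMonoidAlgebraFreeMonoid]

theorem span_range_lift_ι :
    Submodule.span R (Set.range (FreeMonoid.lift (ι R (X := X)))) = ⊤ := by
  rw [← (basisFreeMonoid R X).span_eq]
  congr 2
  exact funext fun w ↦ (basisFreeMonoid_apply R w).symm

variable (X) in
def homogeneousSubmodule (n : ℕ) : Submodule R (FreeAlgebra R X) :=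
  Submodule.span R (FreeMonoid.lift (ι R) '' {w | w.length = n})

variable {R}

theorem lift_ι_mem_homogeneousSubmodule (w : FreeMonoid X) :
    FreeMonoid.lift (ι R) w ∈ homogeneousSubmodule R X w.length :=
  Submodule.subset_span ⟨w, rfl, rfl⟩

theorem mul_mem_homogeneousSubmodule {m n : ℕ} {a b : FreeAlgebra R X}
    (ha : a ∈ homogeneousSubmodule R X m) (hb : b ∈ homogeneousSubmodule R X n) :
    a * b ∈ homogeneousSubmodule R X (m + n) := by
  have hmul : homogeneousSubmodule R X m * homogeneousSubmodule R X n ≤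
      homogeneousSubmodule R X (m + n) := by
    rw [homogeneousSubmodule, homogeneousSubmodule, Submodule.span_mul_span, Submodule.span_le]
    rintro _ ⟨_, ⟨v, rfl, rfl⟩, _, ⟨w, rfl, rfl⟩, rfl⟩
    dsimp only
    rw [← map_mul, ← FreeMonoid.length_mul]
    exact lift_ι_mem_homogeneousSubmodule _
  exact hmul (Submodule.mul_mem_mul ha hb)

theorem constr_lift_ι (f : FreeMonoid X → R) (w : FreeMonoid X) :
    (basisFreeMonoid R X).constr R f (FreeMonoid.lift (ι R) w) = f w := by
  rw [← basisFreeMonoid_apply, Module.Basis.constr_basis]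

theorem constr_eq_zero_of_mem_homogeneousSubmodule {f : FreeMonoid X → R} {n : ℕ}
    (hf : ∀ w : FreeMonoid X, w.length = n → f w = 0) {z : FreeAlgebra R X}
    (hz : z ∈ homogeneousSubmodule R X n) : (basisFreeMonoid R X).constr R f z = 0 := by
  refine (Submodule.span_le (p := LinearMap.ker _)).mpr ?_ hz
  rintro _ ⟨w, hw, rfl⟩
  exact (constr_lift_ι f w).trans (hf w hw)

end FreeAlgebra

open FreeAlgebra Submodule

local notation "ω" => FreeMonoid.lift (FreeAlgebra.ι ℚ)

@[simp] lemma br_zero_left (a : RQ) : br 0 a = 0 := by simp [br]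
@[simp] lemma br_zero_right (a : RQ) : br a 0 = 0 := by simp [br]
@[simp] lemma br_one_left (a : RQ) : br 1 a = 0 := by simp [br]
@[simp] lemma br_one_right (a : RQ) : br a 1 = 0 := by simp [br]

lemma x_eq_lift_ι (i : ℕ) : x i = ω (FreeMonoid.of i) := (FreeMonoid.lift_eval_of _ _).symm

def brBilin : RQ →ₗ[ℚ] RQ →ₗ[ℚ] RQ := LinearMap.mul ℚ RQ - (LinearMap.mul ℚ RQ).flip

lemma br_mem_homogeneousSubmodule {m n : ℕ} {a b : RQ}
    (ha : a ∈ homogeneousSubmodule ℚ ℕ m) (hb : b ∈ homogeneousSubmodule ℚ ℕ n) :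
    br a b ∈ homogeneousSubmodule ℚ ℕ (m + n) :=
  sub_mem (mul_mem_homogeneousSubmodule ha hb)
    (add_comm n m ▸ mul_mem_homogeneousSubmodule hb ha)

section WordFunctional

variable {f : FreeMonoid ℕ → ℚ} (hf : ∀ w : FreeMonoid ℕ, w.length ≠ 4 → f w = 0)
include hf

lemma constr_sandwich_br3_mul_br_word (u a b c d e v : FreeMonoid ℕ) :
    (basisFreeMonoid ℚ ℕ).constr ℚ f
      (ω u * (br (br (ω a) (ω b)) (ω c) * br (ω d) (ω e)) * ω v) = 0 := by
  rcases eq_or_ne a 1 with rfl | ha; · simp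
  rcases eq_or_ne b 1 with rfl | hb; · simp
  rcases eq_or_ne c 1 with rfl | hc; · simp
  rcases eq_or_ne d 1 with rfl | hd; · simp
  rcases eq_or_ne e 1 with rfl | he; · simp
  have hmem := mul_mem_homogeneousSubmodule (mul_mem_homogeneousSubmodule
    (lift_ι_mem_homogeneousSubmodule u) (mul_mem_homogeneousSubmodule
      (br_mem_homogeneousSubmodule (br_mem_homogeneousSubmodule
        (lift_ι_mem_homogeneousSubmodule a) (lift_ι_mem_homogeneousSubmodule b))
        (lift_ι_mem_homogeneousSubmodule c))
      (br_mem_homogeneousSubmodule (lift_ι_mem_homogeneousSubmodule d)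
        (lift_ι_mem_homogeneousSubmodule e))))
    (lift_ι_mem_homogeneousSubmodule v)
  refine constr_eq_zero_of_mem_homogeneousSubmodule (fun w hw ↦ hf w ?_) hmem
  simp only [ne_eq, ← FreeMonoid.length_eq_zero] at ha hb hc hd he
  omega

lemma constr_sandwich_br4_word (hLie : ∀ p q r s : ℕ,
      (basisFreeMonoid ℚ ℕ).constr ℚ f (br (br (br (x p) (x q)) (x r)) (x s)) = 0)
    (u a b c d v : FreeMonoid ℕ) :
    (basisFreeMonoid ℚ ℕ).constr ℚ f (ω u * br (br (br (ω a) (ω b)) (ω c)) (ω d) * ω v) = 0 := by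
  rcases eq_or_ne a 1 with rfl | ha; · simp
  rcases eq_or_ne b 1 with rfl | hb; · simp
  rcases eq_or_ne c 1 with rfl | hc; · simp
  rcases eq_or_ne d 1 with rfl | hd; · simp
  simp only [ne_eq, ← FreeMonoid.length_eq_zero] at ha hb hc hd
  by_cases h4 : u.length + a.length + b.length + c.length + d.length + v.length = 4
  · obtain ⟨p, rfl⟩ := FreeMonoid.length_eq_one.mp (by omega : a.length = 1)
    obtain ⟨q, rfl⟩ := FreeMonoid.length_eq_one.mp (by omega : b.length = 1)
    obtain ⟨r, rfl⟩ := FreeMonoid.length_eq_one.mp (by omega : c.length = 1)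
    obtain ⟨s, rfl⟩ := FreeMonoid.length_eq_one.mp (by omega : d.length = 1)
    obtain rfl := FreeMonoid.length_eq_zero.mp (by omega : u.length = 0)
    obtain rfl := FreeMonoid.length_eq_zero.mp (by omega : v.length = 0)
    simpa [x] using hLie p q r s
  · have hmem := mul_mem_homogeneousSubmodule (mul_mem_homogeneousSubmodule
      (lift_ι_mem_homogeneousSubmodule u) (br_mem_homogeneousSubmodule
        (br_mem_homogeneousSubmodule (br_mem_homogeneousSubmodule
          (lift_ι_mem_homogeneousSubmodule a) (lift_ι_mem_homogeneousSubmodule b))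
          (lift_ι_mem_homogeneousSubmodule c)) (lift_ι_mem_homogeneousSubmodule d)))
      (lift_ι_mem_homogeneousSubmodule v)
    refine constr_eq_zero_of_mem_homogeneousSubmodule (fun w hw ↦ hf w ?_) hmem
    omega

theorem constr_eq_zero_of_mem_T32Q (hLie : ∀ p q r s : ℕ,
      (basisFreeMonoid ℚ ℕ).constr ℚ f (br (br (br (x p) (x q)) (x r)) (x s)) = 0)
    {z : RQ} (hz : z ∈ T32Q) : (basisFreeMonoid ℚ ℕ).constr ℚ f z = 0 := by
  set Λ := (basisFreeMonoid ℚ ℕ).constr ℚ f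
  rw [T32Q, TwoSidedIdeal.mem_span_iff_mem_addSubgroup_closure] at hz
  refine (AddSubgroup.closure_le (K := Λ.toAddMonoidHom.ker)).mpr ?_ hz
  have hω (y : RQ) : y ∈ span ℚ (Set.range ω) := by simp [span_range_lift_ι]
  let μ := LinearMap.mul ℚ RQ
  rintro _ ⟨_, ⟨u, -, g, hg, rfl⟩, v, -, rfl⟩
  rcases hg with ⟨a, b, c, d, e, rfl⟩ | ⟨a, b, c, d, rfl⟩
  · have hmem := apply_mem_span_image2 μ (apply_mem_span_image2 μ (hω u)
      (apply_mem_span_image2 μ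
        (apply_mem_span_image2 brBilin (apply_mem_span_image2 brBilin (hω a) (hω b)) (hω c))
        (apply_mem_span_image2 brBilin (hω d) (hω e)))) (hω v)
    refine (span_le (p := LinearMap.ker Λ)).mpr ?_ hmem
    simp only [Set.image2_subset_iff, Set.forall_mem_image2, Set.forall_mem_range]
    exact fun u a b c d e v ↦ constr_sandwich_br3_mul_br_word hf u a b c d e v
  · have hmem := apply_mem_span_image2 μ (apply_mem_span_image2 μ (hω u)
      (apply_mem_span_image2 brBilin
        (apply_mem_span_image2 brBilin (apply_mem_span_image2 brBilin (hω a) (hω b)) (hω c))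
        (hω d))) (hω v)
    refine (span_le (p := LinearMap.ker Λ)).mpr ?_ hmem
    simp only [Set.image2_subset_iff, Set.forall_mem_image2, Set.forall_mem_range]
    exact fun u a b c d v ↦ constr_sandwich_br4_word hf hLie u a b c d v

end WordFunctional

def middleLettersAgree (w : FreeMonoid ℕ) : ℚ :=
  match w.toList with
  | [_, q, r, _] => if q = r then 1 else 0
  | _ => 0

lemma middleLettersAgree_of_length_ne (w : FreeMonoid ℕ) (hw : w.length ≠ 4) :
    middleLettersAgree w = 0 := by
  unfold middleLettersAgree
  split
  · rename_i h
    simp [FreeMonoid.length, h] at hw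
  · rfl

def middleFunctional : RQ →ₗ[ℚ] ℚ := (basisFreeMonoid ℚ ℕ).constr ℚ middleLettersAgree

lemma middleFunctional_br_br_br (p q r s : ℕ) :
    middleFunctional (br (br (br (x p) (x q)) (x r)) (x s)) = 0 := by
  simp only [middleFunctional, br, x_eq_lift_ι, sub_mul, mul_sub, ← map_mul, map_sub,
    constr_lift_ι, FreeMonoid.toList_mul, FreeMonoid.toList_of, middleLettersAgree]
  simp only [List.cons_append, List.nil_append, eq_comm (a := r), eq_comm (a := q) (b := p)]
  ring

lemma middleFunctional_br_mul_br (p q r s : ℕ) :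
    middleFunctional (br (x p) (x q) * br (x r) (x s)) =
      (if q = r then 1 else 0) - (if q = s then 1 else 0) -
        (if p = r then 1 else 0) + (if p = s then 1 else 0) := by
  simp only [middleFunctional, br, x_eq_lift_ι, sub_mul, mul_sub, ← map_mul, map_sub,
    constr_lift_ι, FreeMonoid.toList_mul, FreeMonoid.toList_of, middleLettersAgree]
  simp only [List.cons_append, List.nil_append]
  ring

theorem stmt16 :
    br (x 1) (x 3) * br (x 2) (x 3) ∉ T32Q ∧ br (x 1) (x 2) * br (x 1) (x 2) ∉ T32Q := by
  have hT {z : RQ} (hz : z ∈ T32Q) : middleFunctional z = 0 :=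
    constr_eq_zero_of_mem_T32Q middleLettersAgree_of_length_ne middleFunctional_br_br_br hz
  refine ⟨fun h ↦ ?_, fun h ↦ ?_⟩ <;>
  · have := hT h
    norm_num [middleFunctional_br_mul_br] at this
end
end
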